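/- arXiv:1609.04341 — 2 statements merged into one kernel-verified Lean document; each statement's English description precedes it below -/
import Mathlib

section
/- Let θ₁,…,θ₁₀ be complex numbers and set tᵢ = θᵢ⁴, and assume t₅+t₆ = t₁−t₂−t₃+t₄, t₇+t₉ = t₁−t₂+t₃−t₄, t₈+t₁₀ = t₁+t₂−t₃−t₄, θ₅²θ₆² = θ₁²θ₄²−θ₂²θ₃², θ₇²θ₉² = θ₁²θ₃²−θ₂²θ₄², θ₈²θ₁₀² = θ₁²θ₂²−θ₃²θ₄², θ₅²θ₉² = θ₃²θ₈²−θ₄²θ₁₀² and θ₅²θ₇² = θ₁²θ₈²−θ₂²θ₁₀². Then the quantities u₂ = Σᵢ₌₁¹⁰ θᵢ⁸ and u₄ = Σᵢ₌₁¹⁰ θᵢ¹⁶ satisfy u₂² = 4 u₄. -/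
/-- The Frobenius identities among the even theta constants imply
the Igusa-quartic relation u₂² = 4 u₄ for u₂ = Σ θᵢ⁸, u₄ = Σ θᵢ¹⁶. -/
theorem igusa_quartic_relation (θ1 θ2 θ3 θ4 θ5 θ6 θ7 θ8 θ9 θ10 : ℂ)
    (hp56 : θ5^2 * θ6^2 = θ1^2 * θ4^2 - θ2^2 * θ3^2)
    (hp79 : θ7^2 * θ9^2 = θ1^2 * θ3^2 - θ2^2 * θ4^2)
    (hp810 : θ8^2 * θ10^2 = θ1^2 * θ2^2 - θ3^2 * θ4^2)
    (hs56 : θ5^4 + θ6^4 = θ1^4 - θ2^4 - θ3^4 + θ4^4)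
    (hs79 : θ7^4 + θ9^4 = θ1^4 - θ2^4 + θ3^4 - θ4^4)
    (hs810 : θ8^4 + θ10^4 = θ1^4 + θ2^4 - θ3^4 - θ4^4)
    (hm59 : θ5^2 * θ9^2 = θ3^2 * θ8^2 - θ4^2 * θ10^2)
    (hm57 : θ5^2 * θ7^2 = θ1^2 * θ8^2 - θ2^2 * θ10^2) :
    (θ1^8 + θ2^8 + θ3^8 + θ4^8 + θ5^8 + θ6^8 + θ7^8 + θ8^8 + θ9^8 + θ10^8) ^ 2
      = 4 * (θ1^16 + θ2^16 + θ3^16 + θ4^16 + θ5^16 + θ6^16 + θ7^16 + θ8^16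
              + θ9^16 + θ10^16) := by
  have h856 : θ5^8 + θ6^8
      = (θ1^4 - θ2^4 - θ3^4 + θ4^4)^2 - 2*(θ1^2*θ4^2 - θ2^2*θ3^2)^2 := by
    linear_combination (θ5^4 + θ6^4 + (θ1^4 - θ2^4 - θ3^4 + θ4^4)) * hs56
      - 2*(θ5^2*θ6^2 + (θ1^2*θ4^2 - θ2^2*θ3^2)) * hp56
  have h879 : θ7^8 + θ9^8
      = (θ1^4 - θ2^4 + θ3^4 - θ4^4)^2 - 2*(θ1^2*θ3^2 - θ2^2*θ4^2)^2 := by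
    linear_combination (θ7^4 + θ9^4 + (θ1^4 - θ2^4 + θ3^4 - θ4^4)) * hs79
      - 2*(θ7^2*θ9^2 + (θ1^2*θ3^2 - θ2^2*θ4^2)) * hp79
  have h8810 : θ8^8 + θ10^8
      = (θ1^4 + θ2^4 - θ3^4 - θ4^4)^2 - 2*(θ1^2*θ2^2 - θ3^2*θ4^2)^2 := by
    linear_combination (θ8^4 + θ10^4 + (θ1^4 + θ2^4 - θ3^4 - θ4^4)) * hs810
      - 2*(θ8^2*θ10^2 + (θ1^2*θ2^2 - θ3^2*θ4^2)) * hp810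
  have h1656 : θ5^16 + θ6^16
      = ((θ1^4 - θ2^4 - θ3^4 + θ4^4)^2 - 2*(θ1^2*θ4^2 - θ2^2*θ3^2)^2)^2
        - 2*(θ1^2*θ4^2 - θ2^2*θ3^2)^4 := by
    linear_combination (θ5^8 + θ6^8
        + ((θ1^4 - θ2^4 - θ3^4 + θ4^4)^2 - 2*(θ1^2*θ4^2 - θ2^2*θ3^2)^2)) * h856
      - 2*(θ5^2*θ6^2 + (θ1^2*θ4^2 - θ2^2*θ3^2))
        * ((θ5^2*θ6^2)^2 + (θ1^2*θ4^2 - θ2^2*θ3^2)^2) * hp56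
  have h1679 : θ7^16 + θ9^16
      = ((θ1^4 - θ2^4 + θ3^4 - θ4^4)^2 - 2*(θ1^2*θ3^2 - θ2^2*θ4^2)^2)^2
        - 2*(θ1^2*θ3^2 - θ2^2*θ4^2)^4 := by
    linear_combination (θ7^8 + θ9^8
        + ((θ1^4 - θ2^4 + θ3^4 - θ4^4)^2 - 2*(θ1^2*θ3^2 - θ2^2*θ4^2)^2)) * h879
      - 2*(θ7^2*θ9^2 + (θ1^2*θ3^2 - θ2^2*θ4^2))
        * ((θ7^2*θ9^2)^2 + (θ1^2*θ3^2 - θ2^2*θ4^2)^2) * hp79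
  have h16810 : θ8^16 + θ10^16
      = ((θ1^4 + θ2^4 - θ3^4 - θ4^4)^2 - 2*(θ1^2*θ2^2 - θ3^2*θ4^2)^2)^2
        - 2*(θ1^2*θ2^2 - θ3^2*θ4^2)^4 := by
    linear_combination (θ8^8 + θ10^8
        + ((θ1^4 + θ2^4 - θ3^4 - θ4^4)^2 - 2*(θ1^2*θ2^2 - θ3^2*θ4^2)^2)) * h8810
      - 2*(θ8^2*θ10^2 + (θ1^2*θ2^2 - θ3^2*θ4^2))
        * ((θ8^2*θ10^2)^2 + (θ1^2*θ2^2 - θ3^2*θ4^2)^2) * hp810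
  linear_combination
    ((θ1^8 + θ2^8 + θ3^8 + θ4^8 + θ5^8 + θ6^8 + θ7^8 + θ8^8 + θ9^8 + θ10^8)
      + (θ1^8 + θ2^8 + θ3^8 + θ4^8
        + ((θ1^4 - θ2^4 - θ3^4 + θ4^4)^2 - 2*(θ1^2*θ4^2 - θ2^2*θ3^2)^2)
        + ((θ1^4 - θ2^4 + θ3^4 - θ4^4)^2 - 2*(θ1^2*θ3^2 - θ2^2*θ4^2)^2)
        + ((θ1^4 + θ2^4 - θ3^4 - θ4^4)^2 - 2*(θ1^2*θ2^2 - θ3^2*θ4^2)^2)))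
      * (h856 + h879 + h8810)
    - 4 * (h1656 + h1679 + h16810)
end

section
/- Let x₁,…,x₆ be complex numbers with Σxᵢ = 0 and power sums s_j. Suppose s₂ = 3I₄, s₃ = (3/2)I₂I₄ − (9/2)I₆, s₅ = (15/8)I₂I₄² − (45/8)I₄I₆ + 1215 I₁₀, s₆ = (27/16)I₄³ + (3/8)I₂²I₄² − (9/4)I₂I₄I₆ + (27/8)I₆² + (729/4)I₂I₁₀ for complex numbers I₂, I₄, I₆, I₁₀. Then, provided 5s₂s₃ − 12s₅ ≠ 0: I₄ = s₂/3, I₁₀ = −s₂s₃/2916 + s₅/1215, I₂ = (5/3)(3s₂³ + 8s₃² − 48s₆)/(5s₂s₃ − 12s₅), and I₆ = (1/27)(15s₂⁴ + 10s₂s₃² − 240s₂s₆ + 72s₃s₅)/(5s₂s₃ − 12s₅). -/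
/-!
The relations are triangular. `s₂` gives `I₄`, and in `5 s₂ s₃ - 12 s₅` the terms in `I₂` and `I₆`
cancel, leaving `-14580 I₁₀`. Solving the `s₃` relation for `I₆ = I₂ I₄ / 3 - 2 s₃ / 9` and
substituting into `s₆`, the terms quadratic in `I₂` cancel as well, so `s₆` is affine in `I₂` with
slope a multiple of `I₁₀`, i.e. of `5 s₂ s₃ - 12 s₅`. Hence `I₂`, and then `I₆`, are obtained by
dividing by this quantity.
-/

section IgusaRelations

variable {K : Type*} [Field K] [CharZero K] {I2 I4 I6 I10 s2 s3 s5 s6 : K}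

theorem igusa_denominator_eq (h2 : s2 = 3 * I4) (h3 : s3 = 3/2 * I2 * I4 - 9/2 * I6)
    (h5 : s5 = 15/8 * I2 * I4^2 - 45/8 * I4 * I6 + 1215 * I10) :
    5 * s2 * s3 - 12 * s5 = -14580 * I10 := by
  subst h2 h3 h5; ring

theorem igusa_I2_mul_denominator (h2 : s2 = 3 * I4) (h3 : s3 = 3/2 * I2 * I4 - 9/2 * I6)
    (h5 : s5 = 15/8 * I2 * I4^2 - 45/8 * I4 * I6 + 1215 * I10)
    (h6 : s6 = 27/16 * I4^3 + 3/8 * I2^2 * I4^2 - 9/4 * I2 * I4 * I6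
                  + 27/8 * I6^2 + 729/4 * I2 * I10) :
    I2 * (5 * s2 * s3 - 12 * s5) = 5/3 * (3 * s2^3 + 8 * s3^2 - 48 * s6) := by
  subst h2 h3 h5 h6; ring

theorem igusa_I6_mul_denominator (h2 : s2 = 3 * I4) (h3 : s3 = 3/2 * I2 * I4 - 9/2 * I6)
    (h5 : s5 = 15/8 * I2 * I4^2 - 45/8 * I4 * I6 + 1215 * I10)
    (h6 : s6 = 27/16 * I4^3 + 3/8 * I2^2 * I4^2 - 9/4 * I2 * I4 * I6
                  + 27/8 * I6^2 + 729/4 * I2 * I10) :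
    I6 * (5 * s2 * s3 - 12 * s5) =
      1/27 * (15 * s2^4 + 10 * s2 * s3^2 - 240 * s2 * s6 + 72 * s3 * s5) := by
  subst h2 h3 h5 h6; ring

end IgusaRelations

theorem igusa_from_power_sums_general (s : ℕ → ℂ)
    (I2 I4 I6 I10 : ℂ)
    (h2 : s 2 = 3 * I4)
    (h3 : s 3 = 3/2 * I2 * I4 - 9/2 * I6)
    (h5 : s 5 = 15/8 * I2 * I4^2 - 45/8 * I4 * I6 + 1215 * I10)
    (h6 : s 6 = 27/16 * I4^3 + 3/8 * I2^2 * I4^2 - 9/4 * I2 * I4 * I6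
                  + 27/8 * I6^2 + 729/4 * I2 * I10)
    (hden : 5 * s 2 * s 3 - 12 * s 5 ≠ 0) :
    I4 = s 2 / 3
    ∧ I10 = -(s 2 * s 3) / 2916 + s 5 / 1215
    ∧ I2 = 5/3 * (3 * (s 2)^3 + 8 * (s 3)^2 - 48 * s 6)
            / (5 * s 2 * s 3 - 12 * s 5)
    ∧ I6 = 1/27 * (15 * (s 2)^4 + 10 * s 2 * (s 3)^2 - 240 * s 2 * s 6
            + 72 * s 3 * s 5) / (5 * s 2 * s 3 - 12 * s 5) := by
  refine ⟨?_, ?_, ?_, ?_⟩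
  · rw [h2]; ring
  · linear_combination (1 / 14580 : ℂ) * igusa_denominator_eq h2 h3 h5
  · rw [eq_div_iff hden]; exact igusa_I2_mul_denominator h2 h3 h5 h6
  · rw [eq_div_iff hden]; exact igusa_I6_mul_denominator h2 h3 h5 h6

/-- Inversion of the relations between the power sums of the
Satake roots and the Igusa invariants. -/
theorem igusa_from_power_sums (x : Fin 6 → ℂ) (s : ℕ → ℂ)
    (I2 I4 I6 I10 : ℂ)
    (hs : ∀ j, s j = ∑ i, x i ^ j)
    (h0 : ∑ i, x i = 0)
    (h2 : s 2 = 3 * I4)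
    (h3 : s 3 = 3/2 * I2 * I4 - 9/2 * I6)
    (h5 : s 5 = 15/8 * I2 * I4^2 - 45/8 * I4 * I6 + 1215 * I10)
    (h6 : s 6 = 27/16 * I4^3 + 3/8 * I2^2 * I4^2 - 9/4 * I2 * I4 * I6
                  + 27/8 * I6^2 + 729/4 * I2 * I10)
    (hden : 5 * s 2 * s 3 - 12 * s 5 ≠ 0) :
    I4 = s 2 / 3
    ∧ I10 = -(s 2 * s 3) / 2916 + s 5 / 1215
    ∧ I2 = 5/3 * (3 * (s 2)^3 + 8 * (s 3)^2 - 48 * s 6)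
            / (5 * s 2 * s 3 - 12 * s 5)
    ∧ I6 = 1/27 * (15 * (s 2)^4 + 10 * s 2 * (s 3)^2 - 240 * s 2 * s 6
            + 72 * s 3 * s 5) / (5 * s 2 * s 3 - 12 * s 5) :=
  igusa_from_power_sums_general s I2 I4 I6 I10 h2 h3 h5 h6 hden
end
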